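/- For every orientation-preserving PL homeomorphism f of [0,1], there exists an orientation-preserving PL homeomorphism g of [0,1] with g(x) > x for all x ∈ (0,1), g′(0) = 2, g′(1) = 1/2, and monitoring intervals I, J for g whose monitored information equals f. -/
import Mathlib

open Set

/-- An orientation-preserving piecewise linear homeomorphism of `[0,1]`,
viewed as a map of `ℝ` extended by the identity outside `[0,1]`. -/
def IsPLHomeo (f : ℝ → ℝ) : Prop :=
  Function.Bijective f ∧ StrictMono f ∧ f 0 = 0 ∧ f 1 = 1 ∧
  (∀ x, x ∉ Icc (0 : ℝ) 1 → f x = x) ∧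
  ∃ n : ℕ, ∃ x : Fin (n + 1) → ℝ, StrictMono x ∧ x 0 = 0 ∧ x (Fin.last n) = 1 ∧
    ∀ i : Fin n, ∃ c d : ℝ, ∀ t ∈ Icc (x i.castSucc) (x i.succ), f t = c * t + d

/-- `g` is linear of slope `c` near `0`. -/
def Slope0 (f : ℝ → ℝ) (c : ℝ) : Prop :=
  ∃ ε > (0 : ℝ), ∀ t ∈ Icc (0 : ℝ) ε, f t = c * t

/-- `g` is linear of slope `c` near `1`. -/
def Slope1 (f : ℝ → ℝ) (c : ℝ) : Prop :=
  ∃ ε > (0 : ℝ), ∀ t ∈ Icc (1 - ε) (1 : ℝ), f t = c * (t - 1) + 1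

/-- The intervals `I = [a, 2a]` and `J = [1-2b, 1-b]` are monitoring intervals for `g`
(with exponent `N`), with monitored information `f = φ_J⁻¹ ∘ g^N ∘ φ_I`, where
`φ_K : [0,1] → K` denotes the orientation-preserving affine bijection.  Here
`φ_I(t) = a + a·t` and `φ_J(t) = (1 - 2b) + b·t`.  `I` is required to lie in an end
linear zone of `g` at `0` (where `g` has slope `2`) and `J` in an end linear zone of
`g` at `1` (where `g` has slope `1/2`), and `g^N` maps `I` onto `J`. -/
def Monitors (g : ℝ → ℝ) (a b : ℝ) (N : ℕ) (f : ℝ → ℝ) : Prop :=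
  0 < a ∧ 0 < b ∧ 0 < N ∧
  (∀ t ∈ Icc (0 : ℝ) (2 * a), g t = 2 * t) ∧
  (∀ t ∈ Icc (1 - 2 * b) (1 : ℝ), g t = (t - 1) / 2 + 1) ∧
  g^[N] a = 1 - 2 * b ∧ g^[N] (2 * a) = 1 - b ∧
  ∀ t ∈ Icc (0 : ℝ) 1, g^[N] (a + a * t) = (1 - 2 * b) + b * f t

/-- The suspension map used to monitor `f`. -/
noncomputable def gmap (f : ℝ → ℝ) : ℝ → ℝ := fun t =>
  if t < 0 then t
  else if t ≤ 1/3 then 2 * t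
  else if t ≤ 2/3 then 2/3 + f (3 * t - 1) / 6
  else if t ≤ 1 then (t - 1) / 2 + 1
  else t

/-- Breakpoints of `gmap f` built from breakpoints of `f`. -/
noncomputable def brk (n : ℕ) (x : Fin (n + 1) → ℝ) : Fin (n + 3) → ℝ := fun i =>
  if i.val = 0 then 0
  else if h : i.val ≤ n + 1 then (1 + x ⟨i.val - 1, by omega⟩) / 3
  else 1

lemma brk_zero (n : ℕ) (x : Fin (n + 1) → ℝ) (i : Fin (n + 3)) (h : i.val = 0) :
    brk n x i = 0 := by
  simp only [brk]; rw [if_pos h]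

lemma brk_mid (n : ℕ) (x : Fin (n + 1) → ℝ) (i : Fin (n + 3))
    (h1 : i.val ≠ 0) (h2 : i.val ≤ n + 1) :
    brk n x i = (1 + x ⟨i.val - 1, by omega⟩) / 3 := by
  simp only [brk]; rw [if_neg h1, dif_pos h2]

lemma brk_last (n : ℕ) (x : Fin (n + 1) → ℝ) (i : Fin (n + 3)) (h : n + 1 < i.val) :
    brk n x i = 1 := by
  simp only [brk]; rw [if_neg (by omega), dif_neg (by omega)]

lemma glueStrict {g : ℝ → ℝ} {b : ℝ} {S T : Set ℝ}
    (hS : ∀ s ∈ S, s ≤ b) (hT : ∀ t ∈ T, b ≤ t)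
    (hbS : b ∈ S) (hbT : b ∈ T)
    (h1 : StrictMonoOn g S) (h2 : StrictMonoOn g T) :
    StrictMonoOn g (S ∪ T) := by
  intro s hs t ht hst
  rcases hs with hs | hs <;> rcases ht with ht | ht
  · exact h1 hs ht hst
  · rcases lt_or_ge s b with h | h
    · exact lt_of_lt_of_le (h1 hs hbS h) (h2.monotoneOn hbT ht (hT t ht))
    · have hsb : s = b := le_antisymm (hS s hs) h
      subst hsb
      exact h2 hbT ht hst
  · exact absurd hst (not_lt.2 ((hS t ht).trans (hT s hs)))
  · exact h2 hs ht hst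

/-- Every orientation-preserving PL homeomorphism `f` of `[0,1]` is the monitored
information of some `g` with `g(x) > x` on `(0,1)`, `g'(0) = 2`, `g'(1) = 1/2`. -/
theorem every_information_is_monitored
    (f : ℝ → ℝ) (hf : IsPLHomeo f) :
    ∃ g : ℝ → ℝ, IsPLHomeo g ∧ (∀ x ∈ Ioo (0 : ℝ) 1, x < g x) ∧
      Slope0 g 2 ∧ Slope1 g (1 / 2) ∧
      ∃ a b : ℝ, ∃ N : ℕ, Monitors g a b N f := by
  obtain ⟨hbij, hmono, hf0, hf1, hid, n, x, hxm, hx0, hxl, hxp⟩ := hf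
  set g : ℝ → ℝ := gmap f with hgdef
  have hgval : ∀ t : ℝ, g t = if t < 0 then t else if t ≤ 1/3 then 2 * t
      else if t ≤ 2/3 then 2/3 + f (3 * t - 1) / 6
      else if t ≤ 1 then (t - 1) / 2 + 1 else t := fun t => rfl
  -- piecewise value lemmas (with overlapping closed intervals)
  have hA : ∀ t : ℝ, t ≤ 0 → g t = t := by
    intro t ht
    rw [hgval]
    rcases lt_or_eq_of_le ht with h | h
    · rw [if_pos h]
    · subst h; norm_num
  have hB : ∀ t : ℝ, 0 ≤ t → t ≤ 1/3 → g t = 2 * t := by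
    intro t h0 h1
    rw [hgval, if_neg (not_lt.2 h0), if_pos h1]
  have hC : ∀ t : ℝ, 1/3 ≤ t → t ≤ 2/3 → g t = 2/3 + f (3 * t - 1) / 6 := by
    intro t h1 h2
    rw [hgval, if_neg (by intro h; linarith)]
    rcases eq_or_lt_of_le h1 with h | h
    · rw [← h]; norm_num [hf0]
    · rw [if_neg (by intro hh; linarith), if_pos h2]
  have hD : ∀ t : ℝ, 2/3 ≤ t → t ≤ 1 → g t = (t - 1) / 2 + 1 := by
    intro t h1 h2
    rw [hgval, if_neg (by intro h; linarith), if_neg (by intro h; linarith)]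
    rcases eq_or_lt_of_le h1 with h | h
    · rw [← h]; norm_num [hf1]
    · rw [if_neg (by intro hh; linarith), if_pos h2]
  have hE : ∀ t : ℝ, 1 ≤ t → g t = t := by
    intro t ht
    rw [hgval, if_neg (by intro h; linarith), if_neg (by intro h; linarith),
      if_neg (by intro h; linarith)]
    rcases eq_or_lt_of_le ht with h | h
    · rw [← h]; norm_num
    · rw [if_neg (not_le.2 h)]
  -- bounds on f
  have hfge : ∀ u : ℝ, 0 ≤ u → 0 ≤ f u := by
    intro u hu
    have := hmono.monotone hu
    rwa [hf0] at this
  have hfle : ∀ u : ℝ, u ≤ 1 → f u ≤ 1 := by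
    intro u hu
    have := hmono.monotone hu
    rwa [hf1] at this
  -- strict monotonicity
  have hm1 : StrictMonoOn g (Iic (0:ℝ)) := by
    intro s hs t ht hst
    rw [hA s hs, hA t ht]; exact hst
  have hm2 : StrictMonoOn g (Icc (0:ℝ) (1/3)) := by
    intro s hs t ht hst
    rw [hB s hs.1 hs.2, hB t ht.1 ht.2]; linarith
  have hm3 : StrictMonoOn g (Icc (1/3:ℝ) (2/3)) := by
    intro s hs t ht hst
    rw [hC s hs.1 hs.2, hC t ht.1 ht.2]
    have := hmono (show 3 * s - 1 < 3 * t - 1 by linarith)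
    linarith
  have hm4 : StrictMonoOn g (Icc (2/3:ℝ) 1) := by
    intro s hs t ht hst
    rw [hD s hs.1 hs.2, hD t ht.1 ht.2]; linarith
  have hm5 : StrictMonoOn g (Ici (1:ℝ)) := by
    intro s hs t ht hst
    rw [hE s hs, hE t ht]; exact hst
  have hg01 : StrictMonoOn g (Iic (1/3:ℝ)) := by
    refine (glueStrict (b := (0:ℝ)) (fun s hs => hs) (fun t ht => ht.1)
      (mem_Iic.2 le_rfl) (show (0:ℝ) ∈ Icc (0:ℝ) (1/3) from ⟨le_rfl, by norm_num⟩) hm1 hm2).mono ?_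
    intro y hy
    rcases le_total y 0 with h | h
    · exact Or.inl h
    · exact Or.inr ⟨h, hy⟩
  have hg02 : StrictMonoOn g (Iic (2/3:ℝ)) := by
    refine (glueStrict (b := (1/3:ℝ)) (fun s hs => hs) (fun t ht => ht.1)
      (mem_Iic.2 le_rfl) (show (1/3:ℝ) ∈ Icc (1/3:ℝ) (2/3) from ⟨le_rfl, by norm_num⟩) hg01 hm3).mono ?_
    intro y hy
    rcases le_total y (1/3) with h | h
    · exact Or.inl h
    · exact Or.inr ⟨h, hy⟩
  have hg03 : StrictMonoOn g (Iic (1:ℝ)) := by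
    refine (glueStrict (b := (2/3:ℝ)) (fun s hs => hs) (fun t ht => ht.1)
      (mem_Iic.2 le_rfl) (show (2/3:ℝ) ∈ Icc (2/3:ℝ) 1 from ⟨le_rfl, by norm_num⟩) hg02 hm4).mono ?_
    intro y hy
    rcases le_total y (2/3) with h | h
    · exact Or.inl h
    · exact Or.inr ⟨h, hy⟩
  have hgm : StrictMono g := by
    rw [← strictMonoOn_univ]
    refine (glueStrict (b := (1:ℝ)) (fun s hs => hs) (fun t ht => ht)
      (mem_Iic.2 le_rfl) (mem_Ici.2 le_rfl) hg03 hm5).mono ?_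
    intro y _
    rcases le_total y 1 with h | h
    · exact Or.inl h
    · exact Or.inr h
  -- surjectivity
  have hsurj : Function.Surjective g := by
    intro y
    rcases le_total y 0 with h | h
    · exact ⟨y, hA y h⟩
    rcases le_total y (2/3) with h2 | h2
    · exact ⟨y/2, by rw [hB (y/2) (by linarith) (by linarith)]; ring⟩
    rcases le_total y (5/6) with h3 | h3
    · obtain ⟨u, hu⟩ := hbij.2 (6 * y - 4)
      have hu0 : 0 ≤ u := by
        by_contra hc
        push_neg at hc
        have := hmono hc
        rw [hf0, hu] at this; linarith
      have hu1 : u ≤ 1 := by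
        by_contra hc
        push_neg at hc
        have := hmono hc
        rw [hf1, hu] at this; linarith
      refine ⟨(u + 1)/3, ?_⟩
      rw [hC _ (by linarith) (by linarith), show 3 * ((u + 1)/3) - 1 = u by ring, hu]
      ring
    rcases le_total y 1 with h4 | h4
    · exact ⟨2 * y - 1, by rw [hD _ (by linarith) (by linarith)]; ring⟩
    · exact ⟨y, hE y h4⟩
  -- bounds on x
  have hxge : ∀ j : Fin (n + 1), 0 ≤ x j := by
    intro j
    rw [← hx0]
    exact hxm.monotone (Fin.zero_le j)
  have hxle : ∀ j : Fin (n + 1), x j ≤ 1 := by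
    intro j
    rw [← hxl]
    exact hxm.monotone (Fin.le_last j)
  refine ⟨g, ⟨⟨hgm.injective, hsurj⟩, hgm, by rw [hA 0 le_rfl], hE 1 le_rfl, ?_, ?_⟩,
    ?_, ?_, ?_, ?_⟩
  · -- identity outside [0,1]
    intro y hy
    rcases lt_or_ge y 0 with h | h
    · exact hA y h.le
    · have : 1 < y := by
        by_contra hc
        push_neg at hc
        exact hy ⟨h, hc⟩
      exact hE y this.le
  · -- PL structure
    refine ⟨n + 2, brk n x, ?_, ?_, ?_, ?_⟩
    · -- strict mono of breakpoints
      intro i j hij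
      have hij' : i.val < j.val := hij
      have hi3 := i.isLt
      have hj3 := j.isLt
      rcases Nat.eq_zero_or_pos i.val with h0 | h0
      · rw [brk_zero n x i h0]
        rcases le_or_gt j.val (n + 1) with hj | hj
        · rw [brk_mid n x j (by omega) hj]
          have := hxge ⟨j.val - 1, by omega⟩
          linarith
        · rw [brk_last n x j hj]; norm_num
      · rcases le_or_gt i.val (n + 1) with hi | hi
        · rw [brk_mid n x i (by omega) hi]
          rcases le_or_gt j.val (n + 1) with hj | hj
          · rw [brk_mid n x j (by omega) hj]
            have := hxm (show (⟨i.val - 1, by omega⟩ : Fin (n + 1)) < ⟨j.val - 1, by omega⟩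
              from by simp only [Fin.mk_lt_mk]; omega)
            linarith
          · rw [brk_last n x j hj]
            have := hxle ⟨i.val - 1, by omega⟩
            linarith
        · omega
    · exact brk_zero n x 0 rfl
    · exact brk_last n x (Fin.last (n + 2)) (by simp [Fin.last])
    · -- affine pieces
      intro i
      have hi2 := i.isLt
      have hcs : (i.castSucc : Fin (n + 3)).val = i.val := rfl
      have hsc : (i.succ : Fin (n + 3)).val = i.val + 1 := rfl
      rcases Nat.eq_zero_or_pos i.val with h0 | h0
      · -- first piece [0, 1/3]
        refine ⟨2, 0, ?_⟩
        have e1 : brk n x i.castSucc = 0 := brk_zero n x _ (by omega)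
        have e2 : brk n x i.succ = 1/3 := by
          rw [brk_mid n x i.succ (by omega) (by omega)]
          have : (⟨(i.succ : Fin (n+3)).val - 1, by omega⟩ : Fin (n + 1)) = 0 := by
            apply Fin.ext; simp [hsc, h0]
          rw [this, hx0]; norm_num
        rw [e1, e2]
        intro t ht
        rw [hB t ht.1 ht.2]; ring
      · rcases Nat.lt_or_ge i.val (n + 1) with h1 | h1
        · -- middle pieces: affine copies of pieces of f
          set j : Fin n := ⟨i.val - 1, by omega⟩ with hj
          obtain ⟨c, d, hcd⟩ := hxp j
          refine ⟨c/2, 2/3 + (d - c)/6, ?_⟩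
          have e1 : brk n x i.castSucc = (1 + x j.castSucc) / 3 := by
            rw [brk_mid n x i.castSucc (by omega) (by omega)]
            have hh : (⟨(i.castSucc : Fin (n + 3)).val - 1, by omega⟩ : Fin (n + 1))
                = j.castSucc := by
              apply Fin.ext
              simp [hj, hcs]
            rw [hh]
          have e2 : brk n x i.succ = (1 + x j.succ) / 3 := by
            rw [brk_mid n x i.succ (by omega) (by omega)]
            have hh : (⟨(i.succ : Fin (n + 3)).val - 1, by omega⟩ : Fin (n + 1))
                = j.succ := by
              apply Fin.ext
              simp [hj, hsc, Fin.val_succ]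
              omega
            rw [hh]
          rw [e1, e2]
          intro t ht
          have hb1 : (1:ℝ)/3 ≤ t := by
            have := hxge j.castSucc; have := ht.1; linarith
          have hb2 : t ≤ 2/3 := by
            have := hxle j.succ; have := ht.2; linarith
          rw [hC t hb1 hb2, hcd (3 * t - 1) ⟨by linarith [ht.1], by linarith [ht.2]⟩]
          ring
        · -- last piece [2/3, 1]
          have hieq : i.val = n + 1 := by omega
          refine ⟨1/2, 1/2, ?_⟩
          have e1 : brk n x i.castSucc = 2/3 := by
            rw [brk_mid n x i.castSucc (by omega) (by omega)]
            have : (⟨(i.castSucc : Fin (n+3)).val - 1, by omega⟩ : Fin (n + 1)) = Fin.last n := by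
              apply Fin.ext; simp [hcs, hieq, Fin.last]
            rw [this, hxl]; norm_num
          have e2 : brk n x i.succ = 1 := brk_last n x _ (by omega)
          rw [e1, e2]
          intro t ht
          rw [hD t ht.1 ht.2]; ring
  · -- g x > x on (0,1)
    intro y hy
    rcases le_total y (1/3) with h | h
    · rw [hB y hy.1.le h]; linarith [hy.1]
    rcases le_total y (2/3) with h2 | h2
    · rw [hC y h h2]
      have : f 0 < f (3 * y - 1) ∨ 0 ≤ f (3 * y - 1) := by
        rcases lt_or_ge 0 (3 * y - 1) with hh | hh
        · exact Or.inl (hmono hh)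
        · exact Or.inr (hfge _ (by rcases eq_or_lt_of_le h with h' | h' <;> [skip; linarith]; rw [← h']; norm_num))
      have h0le : 0 ≤ f (3 * y - 1) := by
        rcases this with hh | hh
        · rw [hf0] at hh; linarith
        · exact hh
      rcases eq_or_lt_of_le h with h' | h'
      · -- y = 1/3
        rw [← h']
        norm_num [show (3:ℝ) * (1/3) - 1 = 0 by ring, hf0]
      · have : 0 < f (3 * y - 1) := by
          have := hmono (show (0:ℝ) < 3 * y - 1 by linarith)
          rw [hf0] at this; exact this
        linarith
    · rw [hD y h2 hy.2.le]
      linarith [hy.2]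
  · -- Slope0
    exact ⟨1/3, by norm_num, fun t ht => hB t ht.1 ht.2⟩
  · -- Slope1
    refine ⟨1/3, by norm_num, fun t ht => ?_⟩
    rw [hD t (by linarith [ht.1]) ht.2]
    ring
  · -- Monitors
    refine ⟨1/6, 1/6, 2, by norm_num, by norm_num, by norm_num, ?_, ?_, ?_, ?_, ?_⟩
    · intro t ht
      exact hB t ht.1 (by linarith [ht.2])
    · intro t ht
      exact hD t (by linarith [ht.1]) ht.2
    · have h1 : g (1/6 : ℝ) = 1/3 := by rw [hB (1/6) (by norm_num) (by norm_num)]; norm_num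
      have h2 : g (1/3 : ℝ) = 2/3 := by rw [hB (1/3) (by norm_num) le_rfl]; norm_num
      rw [Function.iterate_succ_apply, Function.iterate_one, h1, h2]
      norm_num
    · have h1 : g (2 * (1/6) : ℝ) = 2/3 := by
        rw [hB (2 * (1/6)) (by norm_num) (by norm_num)]; norm_num
      have h2 : g (2/3 : ℝ) = 5/6 := by
        rw [hC (2/3) (by norm_num) le_rfl]
        norm_num [show (3:ℝ) * (2/3) - 1 = 1 by ring, hf1]
      rw [Function.iterate_succ_apply, Function.iterate_one, h1, h2]
      norm_num
    · intro t ht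
      have h1 : g (1/6 + 1/6 * t) = 1/3 + t/3 := by
        rw [hB _ (by linarith [ht.1]) (by linarith [ht.2])]; ring
      have h2 : g (1/3 + t/3) = 2/3 + f t / 6 := by
        rw [hC _ (by linarith [ht.1]) (by linarith [ht.2])]
        congr 2
        ring_nf
      rw [Function.iterate_succ_apply, Function.iterate_one, h1, h2]
      ring
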